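/- Let f = (f_1,…,f_q) be a vector polynomial and S ⊆ ℝⁿ a nonempty set such that every f_i, i = 1,…,q, is bounded from below on S. Then for every λ ∈ ℝ^q with λ_i ≥ 0 for all i and λ ≠ 0, one has 0 ∈ SOL(S_∞, (Σ_{i=1}^q λ_i f_i)^∞). -/

import Mathlib

open Filter Topology MvPolynomial Bornology

noncomputable section

/-- The asymptotic (recession) cone of a set `A ⊆ ℝⁿ`. -/
def asymCone {n : ℕ} (A : Set (Fin n → ℝ)) : Set (Fin n → ℝ) :=
  {v | ∃ (t : ℕ → ℝ) (x : ℕ → (Fin n → ℝ)),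
    Filter.Tendsto t Filter.atTop Filter.atTop ∧ (∀ k, x k ∈ A) ∧
    Filter.Tendsto (fun k => (t k)⁻¹ • x k) Filter.atTop (nhds v)}

/-- Pareto efficient solutions of the vector map `g` on `C`. -/
def SOLs {n q : ℕ} (C : Set (Fin n → ℝ)) (g : Fin q → (Fin n → ℝ) → ℝ) :
    Set (Fin n → ℝ) :=
  {x | x ∈ C ∧ ¬ ∃ y ∈ C, (∀ i, g i y ≤ g i x) ∧ (∃ i, g i y ≠ g i x)}

/-- Weak Pareto efficient solutions of the vector map `g` on `C`. -/
def SOLw {n q : ℕ} (C : Set (Fin n → ℝ)) (g : Fin q → (Fin n → ℝ) → ℝ) :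
    Set (Fin n → ℝ) :=
  {x | x ∈ C ∧ ¬ ∃ y ∈ C, ∀ i, g i y < g i x}

/-- Global minimizers of a scalar function `p` on `C`. -/
def SOLmin {n : ℕ} (C : Set (Fin n → ℝ)) (p : (Fin n → ℝ) → ℝ) :
    Set (Fin n → ℝ) :=
  {x | x ∈ C ∧ ∀ y ∈ C, p x ≤ p y}

/-- The recession polynomial (leading term: top-degree homogeneous part) of a
polynomial, as a function on `ℝⁿ`. -/
noncomputable def recPoly {n : ℕ} (p : MvPolynomial (Fin n) ℝ) : (Fin n → ℝ) → ℝ :=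
  fun x => MvPolynomial.eval x (MvPolynomial.homogeneousComponent p.totalDegree p)

/-!
A nonnegative combination `P` of polynomials bounded below on `S` is bounded below on `S`, say
by `m`. If `x k ∈ S` and `x k / t k → v` with `t k → ∞`, then, splitting `P` into homogeneous
components, `P (x k) / t k ^ d → P^∞ v` for `d = deg P`, while `m / t k ^ d → 0` when `d ≥ 1`.
Hence `P^∞ v ≥ 0 = P^∞ 0`; when `d = 0`, `P^∞` is constant.
-/

namespace MvPolynomial

variable {σ R : Type*} [Fintype σ] [CommSemiring R]

theorem IsHomogeneous.eval_smul {φ : MvPolynomial σ R} {d : ℕ} (hφ : φ.IsHomogeneous d)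
    (c : R) (x : σ → R) : eval (c • x) φ = c ^ d * eval x φ := by
  simp only [eval_eq', Finset.mul_sum]
  refine Finset.sum_congr rfl fun m hm => ?_
  have hdeg : ∑ i, m i = d := by
    simpa [Finsupp.weight_apply, Finsupp.sum_fintype] using hφ (mem_support_iff.mp hm)
  simp only [Pi.smul_apply, smul_eq_mul, mul_pow, Finset.prod_mul_distrib,
    Finset.prod_pow_eq_pow_sum, hdeg]
  ring

theorem eval_smul_eq_sum_homogeneousComponent (φ : MvPolynomial σ R) (c : R) (x : σ → R) :
    eval (c • x) φ =
      ∑ j ∈ Finset.range (φ.totalDegree + 1), c ^ j * eval x (homogeneousComponent j φ) := by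
  conv_lhs => rw [← sum_homogeneousComponent φ]
  simp only [map_sum, (homogeneousComponent_isHomogeneous _ φ).eval_smul]

theorem tendsto_inv_pow_totalDegree_mul_eval {ι : Type*} {l : Filter ι}
    (φ : MvPolynomial σ ℝ) {t : ι → ℝ} {x : ι → σ → ℝ} {v : σ → ℝ}
    (ht : Tendsto t l atTop) (hx : Tendsto (fun k => (t k)⁻¹ • x k) l (𝓝 v)) :
    Tendsto (fun k => (t k)⁻¹ ^ φ.totalDegree * eval (x k) φ) l
      (𝓝 (eval v (homogeneousComponent φ.totalDegree φ))) := by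
  set d := φ.totalDegree
  have hsum : ∀ᶠ k in l, ∑ j ∈ Finset.range (d + 1),
        (t k)⁻¹ ^ (d - j) * eval ((t k)⁻¹ • x k) (homogeneousComponent j φ) =
      (t k)⁻¹ ^ d * eval (x k) φ := by
    filter_upwards [ht.eventually_gt_atTop 0] with k hk
    have hxk : x k = t k • (t k)⁻¹ • x k := by rw [smul_inv_smul₀ hk.ne']
    rw [hxk, eval_smul_eq_sum_homogeneousComponent, inv_smul_smul₀ hk.ne', Finset.mul_sum]
    refine Finset.sum_congr rfl fun j hj => ?_
    rw [pow_sub₀ _ (inv_ne_zero hk.ne') (Nat.lt_succ_iff.mp (Finset.mem_range.mp hj)),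
      inv_pow, inv_pow, inv_inv]
    ring
  have hlim : ∑ j ∈ Finset.range (d + 1), (0 : ℝ) ^ (d - j) * eval v (homogeneousComponent j φ) =
      eval v (homogeneousComponent d φ) := by
    rw [Finset.sum_eq_single_of_mem d (Finset.self_mem_range_succ d)]
    · simp
    · intro j hj hjd
      have : j < d := lt_of_le_of_ne (Nat.lt_succ_iff.mp (Finset.mem_range.mp hj)) hjd
      simp [Nat.sub_ne_zero_of_lt this]
  rw [← hlim]
  refine Tendsto.congr' hsum (tendsto_finsetSum _ fun j _ => ?_)
  exact ((tendsto_inv_atTop_zero.comp ht).pow _).mul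
    ((continuous_eval _).continuousAt.tendsto.comp hx)

end MvPolynomial

section AsymptoticCone

variable {n : ℕ}

theorem zero_mem_asymCone {S : Set (Fin n → ℝ)} (hS : S.Nonempty) : 0 ∈ asymCone S := by
  obtain ⟨x, hx⟩ := hS
  have ht : Tendsto (fun k : ℕ => (k : ℝ) + 1) atTop atTop :=
    tendsto_atTop_add_const_right _ 1 tendsto_natCast_atTop_atTop
  refine ⟨_, fun _ => x, ht, fun _ => hx, ?_⟩
  simpa using (tendsto_inv_atTop_zero.comp ht).smul_const x

theorem recPoly_zero_of_totalDegree_pos {P : MvPolynomial (Fin n) ℝ} (hP : 0 < P.totalDegree) :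
    recPoly P 0 = 0 := by
  simpa [recPoly, zero_pow hP.ne'] using
    (homogeneousComponent_isHomogeneous P.totalDegree P).eval_smul (0 : ℝ) 0

theorem recPoly_nonneg_of_mem_asymCone {S : Set (Fin n → ℝ)} {P : MvPolynomial (Fin n) ℝ}
    (hbdd : BddBelow ((fun x => eval x P) '' S)) (hP : 0 < P.totalDegree) {v : Fin n → ℝ}
    (hv : v ∈ asymCone S) : 0 ≤ recPoly P v := by
  obtain ⟨m, hm⟩ := hbdd
  obtain ⟨t, x, ht, hxS, hxv⟩ := hv
  have hlower : Tendsto (fun k => (t k)⁻¹ ^ P.totalDegree * m) atTop (𝓝 0) := by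
    simpa [zero_pow hP.ne'] using ((tendsto_inv_atTop_zero.comp ht).pow P.totalDegree).mul_const m
  refine le_of_tendsto_of_tendsto hlower (tendsto_inv_pow_totalDegree_mul_eval P ht hxv) ?_
  filter_upwards [ht.eventually_gt_atTop 0] with k hk
  exact mul_le_mul_of_nonneg_left (hm ⟨x k, hxS k, rfl⟩) (by positivity)

theorem zero_mem_SOLmin_asymCone_recPoly {S : Set (Fin n → ℝ)} {P : MvPolynomial (Fin n) ℝ}
    (hS : S.Nonempty) (hbdd : BddBelow ((fun x => eval x P) '' S)) :
    0 ∈ SOLmin (asymCone S) (recPoly P) := by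
  refine ⟨zero_mem_asymCone hS, fun v hv => ?_⟩
  rcases Nat.eq_zero_or_pos P.totalDegree with hP | hP
  · simp [recPoly, hP, homogeneousComponent_zero]
  · rw [recPoly_zero_of_totalDegree_pos hP]
    exact recPoly_nonneg_of_mem_asymCone hbdd hP hv

end AsymptoticCone

theorem bddBelow_eval_sum_C_mul {σ ι : Type*} [Fintype ι] {S : Set (σ → ℝ)}
    {f : ι → MvPolynomial σ ℝ} (hf : ∀ i, BddBelow ((fun x => eval x (f i)) '' S))
    {lam : ι → ℝ} (hlam : ∀ i, 0 ≤ lam i) :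
    BddBelow ((fun x => eval x (∑ i, C (lam i) * f i)) '' S) := by
  choose m hm using hf
  refine ⟨∑ i, lam i * m i, Set.forall_mem_image.mpr fun x hx => ?_⟩
  simp only [map_sum, map_mul, eval_C]
  exact Finset.sum_le_sum fun i _ => mul_le_mul_of_nonneg_left (hm i ⟨x, hx, rfl⟩) (hlam i)

theorem stmt5_general {n q : ℕ} (f : Fin q → MvPolynomial (Fin n) ℝ)
    (S : Set (Fin n → ℝ)) (hSne : S.Nonempty)
    (hbd : ∀ i, ∃ m : ℝ, ∀ x ∈ S, m ≤ eval x (f i)) :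
    ∀ lam : Fin q → ℝ, (∀ i, 0 ≤ lam i) → lam ≠ 0 →
      (0 : Fin n → ℝ) ∈
        SOLmin (asymCone S) (recPoly (∑ i, MvPolynomial.C (lam i) * f i)) := by
  intro lam hlam _
  have hf : ∀ i, BddBelow ((fun x => eval x (f i)) '' S) := fun i =>
    (hbd i).imp fun _ hm => Set.forall_mem_image.mpr hm
  exact zero_mem_SOLmin_asymCone_recPoly hSne (bddBelow_eval_sum_C_mul hf hlam)

theorem stmt5 {n q : ℕ} (f : Fin q → MvPolynomial (Fin n) ℝ)
    (hdeg : ∀ i, 1 ≤ (f i).totalDegree)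
    (S : Set (Fin n → ℝ)) (hSne : S.Nonempty)
    (hbd : ∀ i, ∃ m : ℝ, ∀ x ∈ S, m ≤ eval x (f i)) :
    ∀ lam : Fin q → ℝ, (∀ i, 0 ≤ lam i) → lam ≠ 0 →
      (0 : Fin n → ℝ) ∈
        SOLmin (asymCone S) (recPoly (∑ i, MvPolynomial.C (lam i) * f i)) :=
  stmt5_general f S hSne hbd
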